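/- Let f(x) = ∑_{k≥1} c_k x^k be a formal power series with no constant term such that for every positive integer n there exists λ_n ∈ ℂ with U_n f = λ_n f. Then c_k = λ_k c_1 for every k ≥ 1, i.e., f(x) = c_1 ∑_{k≥1} λ_k x^k, and the function k ↦ λ_k is completely multiplicative (λ_{nk} = λ_n λ_k for all n, k ≥ 1) provided c_1 ≠ 0. -/

import Mathlib

/-- The Hecke operator `U n` on formal power series. -/
noncomputable def heckeU (n : ℕ) (f : PowerSeries ℂ) : PowerSeries ℂ :=
  PowerSeries.mk fun k => PowerSeries.coeff (n * k) f

@[simp]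
theorem coeff_heckeU (n k : ℕ) (f : PowerSeries ℂ) :
    PowerSeries.coeff k (heckeU n f) = PowerSeries.coeff (n * k) f := by
  simp [heckeU]

theorem coeff_mul_eq_of_heckeU_eq_smul {n : ℕ} {a : ℂ} {f : PowerSeries ℂ}
    (h : heckeU n f = a • f) (k : ℕ) :
    PowerSeries.coeff (n * k) f = a * PowerSeries.coeff k f := by
  simpa using congrArg (PowerSeries.coeff k) h

theorem stmt_19_general (c : ℕ → ℂ) (lam : ℕ → ℂ)
    (h : ∀ n : ℕ, 0 < n →
      heckeU n (PowerSeries.mk c) = lam n • PowerSeries.mk c) :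
    (∀ k : ℕ, 1 ≤ k → c k = lam k * c 1) ∧
    (c 1 ≠ 0 → ∀ n k : ℕ, 0 < n → 0 < k → lam (n * k) = lam n * lam k) := by
  have hmul : ∀ n k : ℕ, 0 < n → c (n * k) = lam n * c k := fun n k hn => by
    simpa using coeff_mul_eq_of_heckeU_eq_smul (h n hn) k
  have hcoeff : ∀ k : ℕ, 1 ≤ k → c k = lam k * c 1 := fun k hk => by
    simpa using hmul k 1 hk
  refine ⟨hcoeff, fun hc1 n k hn hk => mul_right_cancel₀ hc1 ?_⟩
  calc lam (n * k) * c 1 = c (n * k) := (hcoeff _ (Nat.mul_pos hn hk)).symm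
    _ = lam n * (lam k * c 1) := by rw [hmul n k hn, hcoeff k hk]
    _ = lam n * lam k * c 1 := (mul_assoc _ _ _).symm

theorem stmt_19 (c : ℕ → ℂ) (hc0 : c 0 = 0) (lam : ℕ → ℂ)
    (h : ∀ n : ℕ, 0 < n →
      heckeU n (PowerSeries.mk c) = lam n • PowerSeries.mk c) :
    (∀ k : ℕ, 1 ≤ k → c k = lam k * c 1) ∧
    (c 1 ≠ 0 → ∀ n k : ℕ, 0 < n → 0 < k → lam (n * k) = lam n * lam k) :=
  stmt_19_general c lam h
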